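/- arXiv:1801.10124 — 3 statements merged into one kernel-verified Lean document; each statement's English description precedes it below -/
import Mathlib

section
/- Let R = ℂ[τ, z, z⁻¹] be the Laurent polynomial ring in z over ℂ[τ]. The set of elements f(τ,z) ∈ R such that f(τ, τ·z) also lies in R (i.e. remains a Laurent polynomial, equivalently is regular after the substitution z ↦ τz) is exactly the ℂ-subalgebra generated by x = z and y = τ·z⁻¹; moreover this subalgebra is isomorphic to the polynomial ring ℂ[x,y]. -/
/-!
STATEMENT 0.  `R = ℂ[τ][z,z⁻¹]` is modelled as `LaurentPolynomial (Polynomial ℂ)`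
(the variable `z` is the Laurent variable `T`, and `τ = C Polynomial.X`).
The substitution `z ↦ τ·z` lands in `ℂ[τ,τ⁻¹][z,z⁻¹] = LaurentPolynomial (LaurentPolynomial ℂ)`.
`f(τ,τz)` is "regular" iff it lies in the image of the canonical embedding of `R`.
-/

open LaurentPolynomial

noncomputable section

/-- `R = ℂ[τ][z,z⁻¹]`. -/
abbrev Rring : Type := LaurentPolynomial (Polynomial ℂ)

/-- `S = ℂ[τ,τ⁻¹][z,z⁻¹]`. -/
abbrev Sring : Type := LaurentPolynomial (LaurentPolynomial ℂ)

instance : Algebra (Polynomial ℂ) Sring :=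
  ((LaurentPolynomial.C (R := LaurentPolynomial ℂ)).comp Polynomial.toLaurent).toAlgebra

/-- the unit `z` of `S` -/
def zS : Sringˣ := (isUnit_T (R := LaurentPolynomial ℂ) 1).unit

/-- the unit `τ` of `S` -/
def tS : Sringˣ := ((isUnit_T (R := ℂ) 1).map (LaurentPolynomial.C (R := LaurentPolynomial ℂ))).unit

/-- the canonical embedding `ι : ℂ[τ][z,z⁻¹] → ℂ[τ,τ⁻¹][z,z⁻¹]`, `z ↦ z`. -/
def iota : Rring →ₐ[Polynomial ℂ] Sring :=
  AddMonoidAlgebra.lift (Polynomial ℂ) Sring ℤ ((Units.coeHom Sring).comp (zpowersHom Sringˣ zS))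

/-- the substitution `f(τ,z) ↦ f(τ,τ·z)`. -/
def subst : Rring →ₐ[Polynomial ℂ] Sring :=
  AddMonoidAlgebra.lift (Polynomial ℂ) Sring ℤ
    ((Units.coeHom Sring).comp (zpowersHom Sringˣ (tS * zS)))

/-- `x = z` in `R`. -/
def xR : Rring := T 1

/-- `y = τ·z⁻¹` in `R`. -/
def yR : Rring := LaurentPolynomial.C Polynomial.X * T (-1)

/-!
Write `f = ∑ₙ fₙ(τ) zⁿ`. Then `f(τ, τz) = ∑ₙ fₙ(τ) τⁿ zⁿ` is regular iff `τ⁻ⁿ ∣ fₙ` for every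
`n < 0`. Since `xy = τ`, the elements with this property are spanned by the monomials
`q(τ) yᵏ xᵐ = q(τ) τᵏ z^(m-k)`, which lie in `ℂ[x, y]`; conversely `x` and `y` themselves stay
regular. Sending `τ ↦ X₀X₁` and `z ↦ X₀` maps `x, y` to `X₀, X₁` in the fraction field of
`ℂ[X₀, X₁]`, so `x` and `y` are algebraically independent.
-/

open scoped Polynomial
open Polynomial (X toLaurent)

lemma LaurentPolynomial.coeff_C_mul_T {R : Type*} [Semiring R] (a : R) (n m : ℤ) :
    (C a * T n).coeff m = if n = m then a else 0 := by
  classical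
  rw [← single_eq_C_mul_T, AddMonoidAlgebra.coeff_single, Finsupp.single_apply]

theorem Polynomial.X_pow_dvd_of_toLaurent_eq_mul_T {R : Type*} [CommSemiring R] {p q : R[X]}
    {n : ℤ} (h : toLaurent q = toLaurent p * T n) : X ^ (-n).toNat ∣ p := by
  rcases le_or_gt 0 n with hn | hn
  · simp [Int.toNat_of_nonpos (neg_nonpos.2 hn)]
  · refine ⟨q, toLaurent_injective ?_⟩
    rw [map_mul, toLaurent_X_pow, h, mul_left_comm, ← T_add,
      Int.toNat_of_nonneg (by omega), neg_add_cancel, T_zero, mul_one]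

theorem LaurentPolynomial.algebraicIndependent_T_one_C_X_mul_T_neg_one
    (k : Type*) [CommRing k] [IsDomain k] :
    AlgebraicIndependent k ![(T 1 : LaurentPolynomial k[X]), C X * T (-1)] := by
  let K := FractionRing (MvPolynomial (Fin 2) k)
  let v : Fin 2 → K := fun i => algebraMap (MvPolynomial (Fin 2) k) K (MvPolynomial.X i)
  have hv : AlgebraicIndependent k v :=
    ((IsScalarTower.toAlgHom k (MvPolynomial (Fin 2) k) K).algebraicIndependent_iff
      (IsFractionRing.injective _ K)).2 (MvPolynomial.algebraicIndependent_X (Fin 2) k)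
  have hv0 : IsUnit (v 0) := isUnit_iff_ne_zero.2 (hv.ne_zero 0)
  let ev : LaurentPolynomial k[X] →ₐ[k] K :=
    { eval₂ (Polynomial.aeval (v 0 * v 1)).toRingHom hv0.unit with
      commutes' := fun c => by simp }
  refine .of_comp ev ?_
  convert hv using 1
  ext i
  fin_cases i
  · simp [ev]
  · simpa [ev, div_eq_mul_inv] using mul_div_cancel_left₀ (v 1) (hv.ne_zero 0)

theorem AlgebraicIndependent.exists_algEquiv_adjoin_pair {R A : Type*} [CommRing R] [CommRing A]
    [Algebra R A] {a b : A} (h : AlgebraicIndependent R ![a, b]) :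
    ∃ e : MvPolynomial (Fin 2) R ≃ₐ[R] Algebra.adjoin R ({a, b} : Set A),
      e (MvPolynomial.X 0) = ⟨a, Algebra.subset_adjoin (by simp)⟩ ∧
      e (MvPolynomial.X 1) = ⟨b, Algebra.subset_adjoin (by simp)⟩ := by
  refine ⟨h.aevalEquiv.trans (Subalgebra.equivOfEq _ _ (by rw [Matrix.range_cons_cons_empty])),
    ?_, ?_⟩ <;>
    ext <;> simp [AlgebraicIndependent.aevalEquiv_apply_coe]

lemma coe_zpowersHom_zS :
    (Units.coeHom Sring).comp (zpowersHom Sringˣ zS) = AddMonoidAlgebra.of _ ℤ :=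
  MonoidHom.ext_mint (by simp [zS])

lemma coe_zpowersHom_tS_mul_zS :
    (Units.coeHom Sring).comp (zpowersHom Sringˣ (tS * zS)) =
      (C : LaurentPolynomial ℂ →+* Sring).toMonoidHom.comp
        (AddMonoidAlgebra.of ℂ ℤ) * AddMonoidAlgebra.of _ ℤ :=
  MonoidHom.ext_mint (by simp [tS, zS])

lemma iota_T (n : ℤ) : iota (T n) = T n := by
  rw [iota, T, AddMonoidAlgebra.lift_single, coe_zpowersHom_zS, Algebra.smul_def, map_one, one_mul]
  rfl

lemma subst_T (n : ℤ) : subst (T n) = C (T n) * T n := by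
  rw [subst, T, AddMonoidAlgebra.lift_single, coe_zpowersHom_tS_mul_zS, Algebra.smul_def,
    map_one, one_mul]
  rfl

lemma iota_C (p : ℂ[X]) : iota (C p) = C (toLaurent p) := by
  rw [C_eq_algebraMap, AlgHom.commutes]
  rfl

lemma subst_C (p : ℂ[X]) : subst (C p) = C (toLaurent p) := by
  rw [C_eq_algebraMap, AlgHom.commutes]
  rfl

lemma coeff_iota (f : Rring) (n : ℤ) : (iota f).coeff n = toLaurent (f.coeff n) := by
  induction f using LaurentPolynomial.induction_on' with
  | add p q hp hq => simp [AddMonoidAlgebra.coeff_add, hp, hq]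
  | C_mul_T m a => simp [iota_C, iota_T, coeff_C_mul_T, apply_ite toLaurent]

lemma coeff_subst (f : Rring) (n : ℤ) : (subst f).coeff n = toLaurent (f.coeff n) * T n := by
  induction f using LaurentPolynomial.induction_on' with
  | add p q hp hq => simp [AddMonoidAlgebra.coeff_add, hp, hq, add_mul]
  | C_mul_T m a =>
    rw [map_mul, subst_C, subst_T, ← mul_assoc, ← map_mul, coeff_C_mul_T, coeff_C_mul_T]
    split_ifs with h <;> simp [h]

lemma xR_mem_adjoin : xR ∈ Algebra.adjoin ℂ ({xR, yR} : Set Rring) :=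
  Algebra.subset_adjoin (by simp)

lemma yR_mem_adjoin : yR ∈ Algebra.adjoin ℂ ({xR, yR} : Set Rring) :=
  Algebra.subset_adjoin (by simp)

lemma xR_mul_yR : xR * yR = C X := by
  rw [xR, yR, mul_left_comm, ← T_add, add_neg_cancel, T_zero, mul_one]

lemma C_mem_adjoin (p : ℂ[X]) :
    C p ∈ Algebra.adjoin ℂ ({xR, yR} : Set Rring) := by
  have hC : Polynomial.aeval (xR * yR) p = C p := by
    rw [xR_mul_yR, C_eq_algebraMap, Polynomial.aeval_algebraMap_apply,
      Polynomial.aeval_X_left_apply, C_eq_algebraMap]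
  rw [← hC]
  exact Algebra.adjoin_le (Set.singleton_subset_iff.2 (mul_mem xR_mem_adjoin yR_mem_adjoin))
    (Polynomial.aeval_mem_adjoin_singleton ℂ _)

lemma C_mul_T_mem_adjoin {p : ℂ[X]} {n : ℤ} (h : X ^ (-n).toNat ∣ p) :
    C p * T n ∈ Algebra.adjoin ℂ ({xR, yR} : Set Rring) := by
  obtain ⟨q, rfl⟩ := h
  have hmono : C (X ^ (-n).toNat * q) * T n =
      C q * (yR ^ (-n).toNat * xR ^ n.toNat) := by
    rw [yR, xR, mul_pow, T_pow, T_pow, mul_assoc, ← T_add,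
      show ((-n).toNat : ℤ) * -1 + n.toNat * 1 = n by omega, map_mul, map_pow]
    ring
  rw [hmono]
  exact mul_mem (C_mem_adjoin q) (mul_mem (pow_mem yR_mem_adjoin _) (pow_mem xR_mem_adjoin _))

lemma mem_adjoin_of_X_pow_dvd_coeff {f : Rring} (h : ∀ n, X ^ (-n).toNat ∣ f.coeff n) :
    f ∈ Algebra.adjoin ℂ ({xR, yR} : Set Rring) := by
  rw [← AddMonoidAlgebra.sum_coeff_single f]
  exact Subalgebra.sum_mem _ fun n _ => single_eq_C_mul_T (f.coeff n) n ▸ C_mul_T_mem_adjoin (h n)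

lemma X_pow_dvd_coeff_of_subst_mem_range {f : Rring} (h : subst f ∈ iota.range) (n : ℤ) :
    X ^ (-n).toNat ∣ f.coeff n := by
  obtain ⟨g, hg : iota g = subst f⟩ := h
  exact Polynomial.X_pow_dvd_of_toLaurent_eq_mul_T (q := g.coeff n)
    (by rw [← coeff_iota, hg, coeff_subst])

lemma adjoin_le_comap_subst_range :
    Algebra.adjoin ℂ ({xR, yR} : Set Rring) ≤ (iota.range.comap subst).restrictScalars ℂ := by
  refine Algebra.adjoin_le ?_
  rintro _ (rfl | rfl)
  · refine ⟨C X * T 1, ?_⟩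
    change iota (C X * T 1) = subst (T 1)
    rw [map_mul, iota_C, iota_T, subst_T, Polynomial.toLaurent_X]
  · refine ⟨T (-1), ?_⟩
    change iota (T (-1)) = subst (C X * T (-1))
    rw [iota_T, map_mul, subst_C, subst_T, ← mul_assoc, ← map_mul, Polynomial.toLaurent_X,
      ← T_add, add_neg_cancel, T_zero, map_one, one_mul]

/-- The set of `f(τ,z) ∈ ℂ[τ][z,z⁻¹]` such that `f(τ,τz)` is again regular
is exactly the `ℂ`-subalgebra generated by `x = z` and `y = τ z⁻¹`, and this subalgebra is
isomorphic to the polynomial ring `ℂ[x,y]` (in two variables), via `x ↦ x`, `y ↦ y`. -/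
theorem statement0 :
    (∀ f : Rring, subst f ∈ iota.range ↔
      f ∈ Algebra.adjoin ℂ ({xR, yR} : Set Rring)) ∧
    ∃ e : MvPolynomial (Fin 2) ℂ ≃ₐ[ℂ] Algebra.adjoin ℂ ({xR, yR} : Set Rring),
      e (MvPolynomial.X 0) = ⟨xR, Algebra.subset_adjoin (by simp)⟩ ∧
      e (MvPolynomial.X 1) = ⟨yR, Algebra.subset_adjoin (by simp)⟩ := by
  refine ⟨fun f => ⟨fun h => ?_, fun h => adjoin_le_comap_subst_range h⟩, ?_⟩
  · exact mem_adjoin_of_X_pow_dvd_coeff (X_pow_dvd_coeff_of_subst_mem_range h)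
  · exact (algebraicIndependent_T_one_C_X_mul_T_neg_one ℂ).exists_algEquiv_adjoin_pair
end
end

section
/- Let A be the ℂ[h]-algebra generated by z, z⁻¹, τ with relations zz⁻¹ = z⁻¹z = 1 and z·τ = (τ + h)·z. Set X = z and Y = z⁻¹·τ. Then [X, Y] = XY − YX = h, and the ℂ[h]-subalgebra of A generated by X and Y is isomorphic to the Weyl-type algebra ℂ[h]⟨X,Y⟩/([X,Y] − h). -/
/-!
In `A`, conjugation by `z` shifts `τ` by `h`, so `z⁻¹ τ z = τ - h` and `[z, z⁻¹ τ] = h`; hence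
`X ↦ z`, `Y ↦ z⁻¹ τ` is an algebra map from the Weyl algebra onto the subalgebra generated by
`z` and `z⁻¹ τ`. By the commutation relation the ordered monomials `Yᵃ Xᵇ` span the Weyl algebra,
so injectivity amounts to their images being linearly independent. That is seen in the
representation of `A` on `ℤ →₀ ℂ[h]` in which `z` lowers the index and `τ eₙ = n h eₙ`: there
`Yᵃ Xᵇ e_N = (N - b)⁽ᵃ⁾ hᵃ e_{N-b+a}` with a rising factorial, and on `e_{b+1}` the monomials
`Yᵃ' Xᵇ'` of the same degree `a' - b' = a - b` with `a' > a` vanish at a root of the rising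
factorial, which isolates the coefficient of `Yᵃ Xᵇ` by induction on `a`.
-/

open FreeAlgebra

noncomputable section

abbrev Ch : Type := Polynomial ℂ

/-- the defining relations of `A`: generators `0 ↦ z`, `1 ↦ z⁻¹`, `2 ↦ τ` -/
inductive qtRel : FreeAlgebra Ch (Fin 3) → FreeAlgebra Ch (Fin 3) → Prop
  | mul_inv : qtRel (ι Ch 0 * ι Ch 1) 1
  | inv_mul : qtRel (ι Ch 1 * ι Ch 0) 1
  | comm : qtRel (ι Ch 0 * ι Ch 2)
      ((ι Ch 2 + algebraMap Ch (FreeAlgebra Ch (Fin 3)) Polynomial.X) * ι Ch 0)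

/-- `A = ℂ[h]⟨z,z⁻¹,τ⟩` with `zz⁻¹ = z⁻¹z = 1` and `zτ = (τ+h)z` -/
abbrev Aalg : Type := RingQuot qtRel

def Xel : Aalg := RingQuot.mkAlgHom Ch qtRel (ι Ch 0)
def Yel : Aalg := RingQuot.mkAlgHom Ch qtRel (ι Ch 1 * ι Ch 2)

/-- the single Weyl relation `XY − YX = h`: generators `0 ↦ X`, `1 ↦ Y` -/
inductive weylRel : FreeAlgebra Ch (Fin 2) → FreeAlgebra Ch (Fin 2) → Prop
  | comm : weylRel (ι Ch 0 * ι Ch 1 - ι Ch 1 * ι Ch 0)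
      (algebraMap Ch (FreeAlgebra Ch (Fin 2)) Polynomial.X)

/-- the Weyl-type algebra `ℂ[h]⟨X,Y⟩/([X,Y] − h)` -/
abbrev Weyl : Type := RingQuot weylRel

section Commutator

variable {B : Type*} [Ring B]

theorem mul_mul_sub_mul_mul_eq_of_mul_eq_add_mul {u v t c : B} (huv : u * v = 1)
    (hvu : v * u = 1) (hut : u * t = (t + c) * u) (hc : Commute v c) :
    u * (v * t) - v * t * u = c := by
  have htu : t * u = u * t - c * u := by rw [hut, add_mul, add_sub_cancel_right]
  calc u * (v * t) - v * t * u = t - v * (t * u) := by rw [← mul_assoc, huv, one_mul, mul_assoc]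
    _ = t - (v * u * t - c * v * u) := by simp only [htu, mul_sub, ← mul_assoc, hc.eq]
    _ = c := by rw [mul_assoc c, hvu, mul_one, one_mul, sub_sub_cancel]

end Commutator

section OrderedMonomials

variable {R B : Type*} [CommRing R] [Ring B] [Algebra R B] {p q : B} {c : R}

theorem mul_pow_succ_eq_of_mul_sub_mul (h : p * q - q * p = algebraMap R B c) (n : ℕ) :
    p * q ^ (n + 1) = q ^ (n + 1) * p + ((n + 1 : R) * c) • q ^ n := by
  induction n with
  | zero => simp [← h, Algebra.smul_def]
  | succ n ih =>
    rw [pow_succ q (n + 1), ← mul_assoc, ih, add_mul, smul_mul_assoc, ← pow_succ, mul_assoc,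
      sub_eq_iff_eq_add.mp h, mul_add, ← mul_assoc, ← pow_succ, ← Algebra.commutes,
      ← Algebra.smul_def]
    push_cast
    module

theorem adjoin_le_span_monomials (h : p * q - q * p = algebraMap R B c) :
    Subalgebra.toSubmodule (Algebra.adjoin R {p, q}) ≤
      Submodule.span R (Set.range fun i : ℕ × ℕ => q ^ i.1 * p ^ i.2) := by
  set S := Submodule.span R (Set.range fun i : ℕ × ℕ => q ^ i.1 * p ^ i.2)
  have mem_S (a b : ℕ) : q ^ a * p ^ b ∈ S := Submodule.subset_span ⟨(a, b), rfl⟩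
  have hq : S ≤ S.comap (LinearMap.mulLeft R q) := by
    refine Submodule.span_le.mpr (Set.range_subset_iff.mpr fun i => ?_)
    simpa [← mul_assoc, ← pow_succ'] using mem_S (i.1 + 1) i.2
  have hp : S ≤ S.comap (LinearMap.mulLeft R p) := by
    refine Submodule.span_le.mpr (Set.range_subset_iff.mpr fun ⟨a, b⟩ => ?_)
    rcases a with _ | n
    · simpa [← pow_succ'] using mem_S 0 (b + 1)
    · simp only [SetLike.mem_coe, Submodule.mem_comap, LinearMap.mulLeft_apply, ← mul_assoc,
        mul_pow_succ_eq_of_mul_sub_mul h, add_mul, smul_mul_assoc, mul_assoc _ p, ← pow_succ']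
      exact S.add_mem (mem_S _ _) (S.smul_mem _ (mem_S _ _))
  have hmul : ∀ x ∈ Algebra.adjoin R {p, q}, ∀ s ∈ S, x * s ∈ S := by
    intro x hx
    induction hx using Algebra.adjoin_induction with
    | mem x hx =>
      rcases hx with rfl | rfl
      exacts [fun s hs => hp hs, fun s hs => hq hs]
    | algebraMap r => exact fun s hs => by simpa [← Algebra.smul_def] using S.smul_mem r hs
    | add x y _ _ hx hy => exact fun s hs => by simpa [add_mul] using S.add_mem (hx s hs) (hy s hs)
    | mul x y _ _ hx hy => exact fun s hs => by simpa [mul_assoc] using hx _ (hy s hs)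
  intro x hx
  simpa using hmul x hx 1 (by simpa using mem_S 0 0)

end OrderedMonomials

theorem Xel_mul_Yel_sub_Yel_mul_Xel : Xel * Yel - Yel * Xel = algebraMap Ch Aalg Polynomial.X := by
  have hzw := RingQuot.mkAlgHom_rel Ch qtRel.mul_inv
  have hwz := RingQuot.mkAlgHom_rel Ch qtRel.inv_mul
  have hzτ := RingQuot.mkAlgHom_rel Ch qtRel.comm
  simp only [map_mul, map_one, map_add, AlgHom.commutes] at hzw hwz hzτ
  rw [Xel, Yel, map_mul]
  exact mul_mul_sub_mul_mul_eq_of_mul_eq_add_mul (B := Aalg) hzw hwz hzτ (Algebra.commutes _ _).symm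

namespace Weyl

def x : Weyl := RingQuot.mkAlgHom Ch weylRel (ι Ch 0)
def y : Weyl := RingQuot.mkAlgHom Ch weylRel (ι Ch 1)

theorem x_mul_y_sub_y_mul_x : x * y - y * x = algebraMap Ch Weyl Polynomial.X := by
  simpa only [x, y, map_sub, map_mul, AlgHom.commutes] using RingQuot.mkAlgHom_rel Ch weylRel.comm

theorem adjoin_x_y : Algebra.adjoin Ch {x, y} = ⊤ := by
  have hxy : ({x, y} : Set Weyl) = RingQuot.mkAlgHom Ch weylRel '' Set.range (ι Ch) := by
    ext w
    simp [Fin.exists_fin_two, x, y, eq_comm]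
  rw [hxy, Algebra.adjoin_image, adjoin_range_ι, Algebra.map_top, AlgHom.range_eq_top]
  exact RingQuot.mkAlgHom_surjective Ch weylRel

theorem span_monomials : Submodule.span Ch (Set.range fun i : ℕ × ℕ => y ^ i.1 * x ^ i.2) = ⊤ :=
  top_unique <| by
    simpa [adjoin_x_y] using adjoin_le_span_monomials (R := Ch) (B := Weyl) x_mul_y_sub_y_mul_x

end Weyl

def weylHom : Weyl →ₐ[Ch] Aalg :=
  RingQuot.liftAlgHom Ch ⟨FreeAlgebra.lift Ch ![Xel, Yel], by
    rintro _ _ ⟨⟩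
    simpa using Xel_mul_Yel_sub_Yel_mul_Xel⟩

theorem weylHom_x : weylHom Weyl.x = Xel := by simp [weylHom, Weyl.x]

theorem weylHom_y : weylHom Weyl.y = Yel := by simp [weylHom, Weyl.y]

theorem weylHom_range : weylHom.range = Algebra.adjoin Ch {Xel, Yel} := by
  rw [← Algebra.map_top, ← Weyl.adjoin_x_y, ← Algebra.adjoin_image, Set.image_pair, weylHom_x,
    weylHom_y]

namespace ShiftRep

local notation "V" => ℤ →₀ Ch

def zOp : Module.End Ch V := Finsupp.lmapDomain Ch Ch fun n => n - 1
def zInvOp : Module.End Ch V := Finsupp.lmapDomain Ch Ch fun n => n + 1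
def tauOp : Module.End Ch V :=
  Finsupp.lsum Ch fun n : ℤ => ((n : Ch) * Polynomial.X) • Finsupp.lsingle n

@[simp]
theorem zOp_single (n : ℤ) (r : Ch) : zOp (Finsupp.single n r) = Finsupp.single (n - 1) r := by
  simp [zOp]

@[simp]
theorem zInvOp_single (n : ℤ) (r : Ch) :
    zInvOp (Finsupp.single n r) = Finsupp.single (n + 1) r := by
  simp [zInvOp]

@[simp]
theorem tauOp_single (n : ℤ) (r : Ch) :
    tauOp (Finsupp.single n r) = Finsupp.single n ((n : Ch) * Polynomial.X * r) := by
  simp [tauOp]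

theorem zOp_mul_zInvOp : zOp * zInvOp = 1 :=
  Finsupp.lhom_ext fun n r => by simp

theorem zInvOp_mul_zOp : zInvOp * zOp = 1 :=
  Finsupp.lhom_ext fun n r => by simp

theorem zOp_mul_tauOp : zOp * tauOp = (tauOp + algebraMap Ch _ Polynomial.X) * zOp :=
  Finsupp.lhom_ext fun n r => by
    simp only [Module.End.mul_apply, LinearMap.add_apply, tauOp_single, zOp_single,
      Module.algebraMap_end_apply, Finsupp.smul_single, smul_eq_mul, ← Finsupp.single_add]
    push_cast
    ring_nf

def rep : Aalg →ₐ[Ch] Module.End Ch V :=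
  RingQuot.liftAlgHom Ch ⟨FreeAlgebra.lift Ch ![zOp, zInvOp, tauOp], by
    rintro _ _ ⟨⟩ <;> simp [zOp_mul_zInvOp, zInvOp_mul_zOp, zOp_mul_tauOp]⟩

theorem rep_Xel : rep Xel = zOp := by simp [rep, Xel]

theorem rep_Yel : rep Yel = zInvOp * tauOp := by simp [rep, Yel]

theorem zOp_pow_single (b : ℕ) (n : ℤ) (r : Ch) :
    (zOp ^ b) (Finsupp.single n r) = Finsupp.single (n - b) r := by
  induction b generalizing n with
  | zero => simp
  | succ b ih => rw [pow_succ, Module.End.mul_apply, zOp_single, ih]; push_cast; ring_nf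

theorem zInvOp_mul_tauOp_pow_single (a : ℕ) (n : ℤ) (r : Ch) :
    ((zInvOp * tauOp) ^ a) (Finsupp.single n r) =
      Finsupp.single (n + a) ((ascPochhammer Ch a).eval (n : Ch) * Polynomial.X ^ a * r) := by
  induction a generalizing n r with
  | zero => simp
  | succ a ih =>
    rw [pow_succ, Module.End.mul_apply, Module.End.mul_apply, tauOp_single, zInvOp_single, ih,
      ascPochhammer_succ_left]
    simp only [Polynomial.eval_mul, Polynomial.eval_X, Polynomial.eval_comp, Polynomial.eval_add,
      Polynomial.eval_one]
    push_cast
    ring_nf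

theorem monomial_single_apply (a b : ℕ) (n k : ℤ) :
    ((zInvOp * tauOp) ^ a * zOp ^ b) (Finsupp.single n 1) k =
      if n - b + a = k then (ascPochhammer Ch a).eval ((n - b : ℤ) : Ch) * Polynomial.X ^ a
      else 0 := by
  rw [Module.End.mul_apply, zOp_pow_single, zInvOp_mul_tauOp_pow_single, mul_one,
    Finsupp.single_apply]

theorem monomial_single_apply_ne_zero (a b : ℕ) :
    ((zInvOp * tauOp) ^ a * zOp ^ b) (Finsupp.single (b + 1) 1) (a + 1) ≠ 0 := by
  rw [monomial_single_apply, if_pos (by ring), add_sub_cancel_left, Int.cast_one,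
    ascPochhammer_eval_one]
  exact mul_ne_zero (Nat.cast_ne_zero.mpr a.factorial_ne_zero)
    (pow_ne_zero _ Polynomial.X_ne_zero)

theorem monomial_single_apply_eq_zero {a b a' b' : ℕ} (ha : a ≤ a') (hne : (a', b') ≠ (a, b)) :
    ((zInvOp * tauOp) ^ a' * zOp ^ b') (Finsupp.single (b + 1) 1) (a + 1) = 0 := by
  rw [monomial_single_apply]
  split_ifs with hdeg
  · have hgt : a < a' := lt_of_le_of_ne ha fun h => hne (Prod.ext h.symm (by omega))
    rw [show (b : ℤ) + 1 - b' = -((a' - a - 1 : ℕ) : ℤ) by omega, Int.cast_neg, Int.cast_natCast,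
      ascPochhammer_eval_neg_coe_nat_of_lt (by omega), zero_mul]
  · rfl

theorem linearIndependent_monomials :
    LinearIndependent Ch fun i : ℕ × ℕ => (zInvOp * tauOp) ^ i.1 * zOp ^ i.2 := by
  refine (linearIndependent_iff' (R := Ch) (M := Module.End Ch V)).mpr fun s g hsum => ?_
  suffices h : ∀ a b, (a, b) ∈ s → g (a, b) = 0 from fun i hi => h i.1 i.2 hi
  intro a
  induction a using Nat.strong_induction_on with
  | _ a ih =>
  intro b hab
  have hcoeff := congr($hsum (Finsupp.single ((b : ℤ) + 1) 1) ((a : ℤ) + 1))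
  simp only [LinearMap.coe_sum, LinearMap.coe_smul, Finset.sum_apply, Pi.smul_apply,
    Finsupp.coe_finsetSum, Finsupp.coe_smul, smul_eq_mul, LinearMap.zero_apply, Finsupp.coe_zero,
    Pi.zero_apply] at hcoeff
  rw [Finset.sum_eq_single_of_mem (a, b) hab ?_] at hcoeff
  · exact (mul_eq_zero.mp hcoeff).resolve_right (monomial_single_apply_ne_zero a b)
  · rintro ⟨a', b'⟩ hi hne
    rcases lt_or_ge a' a with hlt | hge
    · rw [ih a' hlt b' hi, zero_mul]
    · rw [monomial_single_apply_eq_zero hge hne, mul_zero]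

end ShiftRep

theorem weylHom_injective : Function.Injective weylHom := by
  have hli : LinearIndependent Ch ((ShiftRep.rep.comp weylHom).toLinearMap ∘
      fun i : ℕ × ℕ => Weyl.y ^ i.1 * Weyl.x ^ i.2) := by
    convert ShiftRep.linearIndependent_monomials with i
    simp only [Function.comp_apply, AlgHom.toLinearMap_apply, AlgHom.comp_apply, map_mul,
      map_pow, weylHom_x, weylHom_y, ShiftRep.rep_Xel, ShiftRep.rep_Yel]
  exact Function.Injective.of_comp (LinearMap.injective_of_linearIndependent (R := Ch)
    (M := Weyl) (N := Module.End Ch (ℤ →₀ Ch)) Weyl.span_monomials hli)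

/-- `[X,Y] = h`, and the `ℂ[h]`-subalgebra of `A` generated by `X = z` and
`Y = z⁻¹τ` is isomorphic to `ℂ[h]⟨X,Y⟩/([X,Y]−h)`, via `X ↦ X`, `Y ↦ Y`. -/
theorem statement7 :
    Xel * Yel - Yel * Xel = algebraMap Ch Aalg Polynomial.X ∧
    ∃ e : Weyl ≃ₐ[Ch] Algebra.adjoin Ch ({Xel, Yel} : Set Aalg),
      e (RingQuot.mkAlgHom Ch weylRel (ι Ch 0)) = ⟨Xel, Algebra.subset_adjoin (by simp)⟩ ∧
      e (RingQuot.mkAlgHom Ch weylRel (ι Ch 1)) = ⟨Yel, Algebra.subset_adjoin (by simp)⟩ := by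
  refine ⟨Xel_mul_Yel_sub_Yel_mul_Xel, (AlgEquiv.ofInjective weylHom weylHom_injective).trans
    (Subalgebra.equivOfEq _ _ weylHom_range), Subtype.ext weylHom_x, Subtype.ext weylHom_y⟩
end
end

section
/- Let A = ℂ[h]⟨z, z⁻¹, τ⟩ with relation zτ = (τ+h)z, and let c denote the (partially defined) conjugation sending an element P to Γ⁻¹PΓ where conjugation acts on generators by z ↦ τ⁻¹z (and fixes τ, h). An element P ∈ A of z-degree −n (n > 0), written uniquely as a ℂ[h]-linear combination of monomials (z⁻¹τ)ⁿτ^m (m ≥ 0) and (z⁻¹τ)^a z^{a−n} (0 ≤ a < n), has regular image under c (i.e. Γ⁻¹PΓ ∈ A) if and only if the coefficients of all monomials (z⁻¹τ)^a z^{a−n} with 0 ≤ a < n vanish. -/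
/-!
Conjugation by `Γ` fixes `τ` and sends `z` to `τz`, hence `z⁻¹τ` to `z⁻¹`, so that
`Γ⁻¹PΓ = ∑ aₘ z⁻ⁿτᵐ + ∑ bᵢ z⁻ⁱ (τz)^(i-n)`, whose first sum is regular. The elements
`pᵢ(τ) := z⁻ⁱ(τz)ⁱ = ∏_{j=1}^{i} (τ - jh)` are monic of degree `i` in `τ`. If the second sum `Q`
is regular, write the regular element `Q zⁿ` in the basis `zᵏτᵐ` as `∑ₖ zᵏ qₖ(τ)`; multiplying by
`pₙ(τ)` on the right gives `Q (τz)ⁿ = ∑ bᵢ pᵢ(τ)`, and comparing `z⁰`-components yields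
`q₀ pₙ = ∑ bᵢ pᵢ`. The left side is `0` or of degree `≥ n`, the right side of degree `< n`,
so both vanish and the `bᵢ` vanish by triangularity.
-/

open Polynomial

theorem SemiconjBy.units_zpow_sub_zsmul {B : Type*} [Ring B] {u : Bˣ} {x c : B}
    (hu : SemiconjBy (u : B) x (x + c)) (hc : Commute (u : B) c) (k : ℤ) :
    SemiconjBy ((u ^ k : Bˣ) : B) (x - k • c) x := by
  induction k using Int.induction_on with
  | zero => simp
  | succ k ih =>
    have h1 : SemiconjBy (u : B) (x - ((k : ℤ) + 1) • c) (x - (k : ℤ) • c) := by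
      convert hu.sub_right (hc.smul_right ((k : ℤ) + 1)) using 1
      rw [add_smul, one_smul]; abel
    rw [zpow_add_one, Units.val_mul]
    exact ih.mul_left h1
  | pred k ih =>
    have h1 : SemiconjBy ((u⁻¹ : Bˣ) : B) (x - (-(k : ℤ) - 1) • c) (x - -(k : ℤ) • c) := by
      have := (hu.add_right (hc.smul_right (k : ℤ))).units_inv_symm_left
      rwa [show x + c + (k : ℤ) • c = x - (-(k : ℤ) - 1) • c by
          simp only [sub_smul, neg_smul, one_smul]; abel,
        show x + (k : ℤ) • c = x - -(k : ℤ) • c by simp only [neg_smul, sub_neg_eq_add]] at this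
    rw [zpow_sub_one, Units.val_mul]
    exact ih.mul_left h1

theorem Units.val_pow_mul_val_inv_pow {B : Type*} [Monoid B] (u : Bˣ) (i : ℕ) :
    (u : B) ^ i * ((u⁻¹ : Bˣ) : B) ^ i = 1 := by
  rw [← Units.val_pow_eq_pow_val, ← Units.inv_pow_eq_pow_inv, Units.mul_inv]

theorem Units.val_inv_pow_mul_val_pow {B : Type*} [Monoid B] (u : Bˣ) (i : ℕ) :
    ((u⁻¹ : Bˣ) : B) ^ i * (u : B) ^ i = 1 := by
  rw [← Units.inv_pow_eq_pow_inv, ← Units.val_pow_eq_pow_val, Units.inv_mul]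

theorem Polynomial.Sequence.eq_zero_of_sum_smul_eq_mul {S : Type*} [CommRing S] [IsDomain S]
    (P : Polynomial.Sequence S) {n : ℕ} (b : Fin n → S) (q : S[X])
    (hsum : ∑ i, b i • P i = P n * q) : b = 0 := by
  have hlt : ∑ i, b i • P i ∈ degreeLT S n :=
    Submodule.sum_mem _ fun i _ => Submodule.smul_mem _ _ <| mem_degreeLT.mpr <| by
      rw [P.degree_eq]; exact_mod_cast i.isLt
  have hq : q = 0 := by
    by_contra hq
    rw [hsum, mem_degreeLT, degree_mul, P.degree_eq, degree_eq_natDegree hq] at hlt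
    norm_cast at hlt
    omega
  rw [hq, mul_zero] at hsum
  funext i
  exact Fintype.linearIndependent_iff.mp (P.linearIndependent.comp _ Fin.val_injective) b hsum i

namespace QuantizedTorus

variable {S B : Type*} [CommRing S] [Ring B] [Algebra S B] {u : Bˣ} {t : B} {h : S}

noncomputable def skewEval (u : Bˣ) (t : B) : (ℤ →₀ S[X]) →ₗ[S] B :=
  Finsupp.lsum S fun k => LinearMap.mulLeft S ((u ^ k : Bˣ) : B) ∘ₗ (aeval t).toLinearMap

theorem skewEval_single (k : ℤ) (q : S[X]) :
    skewEval u t (Finsupp.single k q) = ((u ^ k : Bˣ) : B) * aeval t q := by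
  simp [skewEval]

theorem skewEval_eq_linearCombination :
    skewEval u t =
      Finsupp.linearCombination S (fun p : ℤ × ℕ => ((u ^ p.1 : Bˣ) : B) * t ^ p.2) ∘ₗ
        ((Finsupp.mapRange.linearEquiv (basisMonomials S).repr).trans
          (Finsupp.curryLinearEquiv S).symm).toLinearMap := by
  refine Finsupp.lhom_ext' fun k => Polynomial.lhom_ext' fun j => LinearMap.ext_ring ?_
  have hmon : monomial j (1 : S) = basisMonomials S j := by rw [coe_basisMonomials]
  simp only [LinearMap.comp_apply, Finsupp.lsingle_apply, LinearEquiv.coe_coe,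
    LinearEquiv.trans_apply, Finsupp.mapRange.linearEquiv_apply, Finsupp.mapRange_single,
    Finsupp.curryLinearEquiv_symm_apply, hmon, Module.Basis.repr_self, Finsupp.uncurry_single,
    Finsupp.linearCombination_single, skewEval_single]
  rw [← hmon, aeval_monomial, map_one, one_mul, one_smul]

theorem skewEval_injective
    (hLI : LinearIndependent S fun p : ℤ × ℕ => ((u ^ p.1 : Bˣ) : B) * t ^ p.2) :
    Function.Injective (skewEval (S := S) u t) := by
  rw [skewEval_eq_linearCombination, LinearMap.coe_comp]
  exact Function.Injective.comp hLI (LinearEquiv.injective _)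

theorem skewEval_mul_aeval (F : ℤ →₀ S[X]) (p : S[X]) :
    skewEval u t F * aeval t p =
      skewEval u t (Finsupp.mapRange.linearMap (LinearMap.mulRight S p) F) := by
  have : LinearMap.mulRight S (aeval t p) ∘ₗ skewEval u t =
      skewEval u t ∘ₗ Finsupp.mapRange.linearMap (LinearMap.mulRight S p) :=
    Finsupp.lhom_ext fun k q => by
      simp only [LinearMap.comp_apply, Finsupp.mapRange.linearMap_apply, Finsupp.mapRange_single,
        LinearMap.mulRight_apply, skewEval_single, map_mul, mul_assoc]
  exact LinearMap.congr_fun this F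

theorem mul_mem_range_skewEval (hu : SemiconjBy (u : B) t (t + algebraMap S B h)) {x : B}
    (hx : x ∈ ({(u : B), ((u⁻¹ : Bˣ) : B), t} : Set B)) (F : ℤ →₀ S[X]) :
    x * skewEval u t F ∈ LinearMap.range (skewEval (S := S) u t) := by
  induction F using Finsupp.induction_linear with
  | zero => simp
  | add F G hF hG => rw [map_add, mul_add]; exact add_mem hF hG
  | single k q =>
    rw [skewEval_single]
    rcases hx with rfl | rfl | rfl
    · exact ⟨Finsupp.single (1 + k) q, by
        rw [skewEval_single, zpow_one_add, Units.val_mul, mul_assoc]⟩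
    · exact ⟨Finsupp.single (-1 + k) q, by
        rw [skewEval_single, zpow_add, zpow_neg_one, Units.val_mul, mul_assoc]⟩
    · refine ⟨Finsupp.single k ((X - C (k • h)) * q), ?_⟩
      rw [skewEval_single, map_mul, ← mul_assoc, map_sub, aeval_X, aeval_C, map_zsmul,
        (hu.units_zpow_sub_zsmul (Algebra.commute_algebraMap_right h (u : B)) k).eq, mul_assoc]

theorem adjoin_le_range_skewEval (hu : SemiconjBy (u : B) t (t + algebraMap S B h)) :
    Subalgebra.toSubmodule (Algebra.adjoin S {(u : B), ((u⁻¹ : Bˣ) : B), t}) ≤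
      LinearMap.range (skewEval u t) := by
  rw [Algebra.adjoin_eq_span, Submodule.span_le]
  intro x hx
  induction hx using Submonoid.closure_induction_left with
  | one => exact ⟨Finsupp.single 0 1, by simp [skewEval_single]⟩
  | mul_left x hx y _ ih =>
    obtain ⟨F, rfl⟩ := ih
    exact mul_mem_range_skewEval hu hx F

noncomputable def shiftedFallingFactorial [IsDomain S] (h : S) : Polynomial.Sequence S where
  elems' i := ∏ j ∈ Finset.range i, (X - C (((j + 1 : ℕ) : ℤ) • h))
  degree_eq' i := by simp only [degree_prod, degree_X_sub_C]; simp

theorem inv_pow_mul_pow_eq_aeval [IsDomain S] (hu : SemiconjBy (u : B) t (t + algebraMap S B h))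
    (i : ℕ) : ((u⁻¹ : Bˣ) : B) ^ i * (t * u) ^ i = aeval t (shiftedFallingFactorial h i) := by
  induction i with
  | zero => simp [shiftedFallingFactorial]
  | succ i ih =>
    have hshift := (hu.units_zpow_sub_zsmul (Algebra.commute_algebraMap_right h (u : B))
      ((i + 1 : ℕ) : ℤ)).eq
    rw [zpow_natCast, Units.val_pow_eq_pow_val] at hshift
    calc ((u⁻¹ : Bˣ) : B) ^ (i + 1) * (t * u) ^ (i + 1)
        = ((u⁻¹ : Bˣ) : B) ^ (i + 1) * (t * (u : B) ^ (i + 1)) *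
            (((u⁻¹ : Bˣ) : B) ^ i * (t * u) ^ i) := by
          rw [pow_succ' (t * _), pow_succ' (u : B)]
          simp only [mul_assoc]
          rw [← mul_assoc ((u : B) ^ i), Units.val_pow_mul_val_inv_pow, one_mul]
      _ = (t - ((i + 1 : ℕ) : ℤ) • algebraMap S B h) * aeval t (shiftedFallingFactorial h i) := by
          rw [← hshift, ← mul_assoc (_ ^ (i + 1)), Units.val_inv_pow_mul_val_pow, one_mul, ih]
      _ = aeval t (shiftedFallingFactorial h (i + 1)) := by
          simp [shiftedFallingFactorial, Finset.prod_range_succ, mul_comm]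

theorem eq_zero_of_sum_mem_adjoin [IsDomain S] (hu : SemiconjBy (u : B) t (t + algebraMap S B h))
    (hLI : LinearIndependent S fun p : ℤ × ℕ => ((u ^ p.1 : Bˣ) : B) * t ^ p.2)
    {v : Bˣ} (hv : (v : B) = t * u) {n : ℕ} (b : Fin n → S)
    (hmem : ∑ i : Fin n, b i • (((u⁻¹ : Bˣ) : B) ^ (i : ℕ) * ((v ^ ((i : ℕ) - (n : ℤ)) : Bˣ) : B))
      ∈ Algebra.adjoin S {(u : B), ((u⁻¹ : Bˣ) : B), t}) :
    b = 0 := by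
  set x := ∑ i : Fin n, b i • (((u⁻¹ : Bˣ) : B) ^ (i : ℕ) * ((v ^ ((i : ℕ) - (n : ℤ)) : Bˣ) : B))
  set p := shiftedFallingFactorial h
  obtain ⟨F, hF⟩ : x * (u : B) ^ n ∈ LinearMap.range (skewEval u t) :=
    adjoin_le_range_skewEval hu <| Subalgebra.mem_toSubmodule _ |>.mpr <|
      mul_mem hmem (pow_mem (Algebra.subset_adjoin (by simp)) n)
  have hxv : x * (v : B) ^ n = aeval t (∑ i, b i • p i) := by
    rw [Finset.sum_mul, map_sum]
    refine Finset.sum_congr rfl fun i _ => ?_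
    rw [smul_mul_assoc, map_smul, mul_assoc, ← Units.val_pow_eq_pow_val v n, ← Units.val_mul,
      ← zpow_natCast, ← zpow_add, sub_add_cancel, zpow_natCast, Units.val_pow_eq_pow_val, hv,
      inv_pow_mul_pow_eq_aeval hu]
  have hvn : (v : B) ^ n = (u : B) ^ n * aeval t (p n) := by
    rw [← inv_pow_mul_pow_eq_aeval hu, ← mul_assoc, Units.val_pow_mul_val_inv_pow, one_mul, hv]
  have hF0 : F 0 * p n = ∑ i, b i • p i := by
    have := skewEval_injective hLI <| show
      skewEval u t (Finsupp.mapRange.linearMap (LinearMap.mulRight S (p n)) F) =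
        skewEval u t (Finsupp.single 0 (∑ i, b i • p i)) by
      rw [← skewEval_mul_aeval, hF, mul_assoc, ← hvn, hxv, skewEval_single, zpow_zero,
        Units.val_one, one_mul]
    simpa using congr($this 0)
  exact p.eq_zero_of_sum_smul_eq_mul b (F 0) (by rw [← hF0, mul_comm])

theorem val_inv_mul_mul_eq {g : Bˣ} (hgt : (g : B) * t = t * g)
    (hgam : (u : B) * g * ((u⁻¹ : Bˣ) : B) = t * g) :
    ((g⁻¹ * u * g : Bˣ) : B) = t * u := by
  calc ((g⁻¹ * u * g : Bˣ) : B) = ((g⁻¹ : Bˣ) : B) * ((u : B) * g * ((u⁻¹ : Bˣ) : B)) * u := by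
        simp [mul_assoc]
    _ = t * u := by rw [hgam, ← hgt, Units.inv_mul_cancel_left]

end QuantizedTorus

open QuantizedTorus

theorem statement11_general (B : Type*) [Ring B] [Algebra (Polynomial ℂ) B]
    (u g : Bˣ) (t : B)
    (hrel : (u : B) * t = (t + algebraMap (Polynomial ℂ) B Polynomial.X) * (u : B))
    (hgt : (g : B) * t = t * (g : B))
    (hgam : (u : B) * (g : B) * ((u⁻¹ : Bˣ) : B) = t * (g : B))
    (hLI : LinearIndependent (Polynomial ℂ)
      (fun p : ℤ × ℕ => ((u ^ p.1 : Bˣ) : B) * t ^ p.2))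
    (n : ℕ) (a : ℕ →₀ Polynomial ℂ) (b : Fin n → Polynomial ℂ) :
    letI P : B :=
      a.sum (fun m cm => cm • ((((u⁻¹ : Bˣ) : B) * t) ^ n * t ^ m)) +
      ∑ i : Fin n, b i • ((((u⁻¹ : Bˣ) : B) * t) ^ (i : ℕ) *
        ((u ^ ((i : ℕ) - (n : ℤ)) : Bˣ) : B))
    (((g⁻¹ : Bˣ) : B) * P * (g : B) ∈
        Algebra.adjoin (Polynomial ℂ) ({(u : B), ((u⁻¹ : Bˣ) : B), t} : Set B)) ↔
      b = 0 := by
  set v : Bˣ := g⁻¹ * u * g with hv_def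
  have hv : (v : B) = t * u := val_inv_mul_mul_eq hgt hgam
  let c := MulSemiringAction.toAlgHom (Polynomial ℂ) B (ConjAct.toConjAct g⁻¹)
  have hc (x : B) : c x = ((g⁻¹ : Bˣ) : B) * x * g := by simp [c, ConjAct.units_smul_def]
  have hct : c t = t := by rw [hc, mul_assoc, ← hgt, Units.inv_mul_cancel_left]
  have hcu (k : ℤ) : c ((u ^ k : Bˣ) : B) = ((v ^ k : Bˣ) : B) := by
    have := conj_zpow (a := g⁻¹) (b := u) (i := k)
    rw [inv_inv] at this
    rw [hc, hv_def, this, Units.val_mul, Units.val_mul]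
  have hcut : c (((u⁻¹ : Bˣ) : B) * t) = ((u⁻¹ : Bˣ) : B) := by
    have hcu' : c ((u⁻¹ : Bˣ) : B) = ((v⁻¹ : Bˣ) : B) := by simpa using hcu (-1)
    rw [map_mul, hct, hcu', Units.inv_mul_eq_iff_eq_mul, hv, Units.mul_inv_cancel_right]
  rw [← hc]
  simp only [map_add, map_finsuppSum, map_sum, map_smul, map_mul, map_pow, hct, hcu, hcut]
  have ha : (a.sum fun m cm => cm • (((u⁻¹ : Bˣ) : B) ^ n * t ^ m)) ∈
      Algebra.adjoin (Polynomial ℂ) ({(u : B), ((u⁻¹ : Bˣ) : B), t} : Set B) :=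
    sum_mem fun m _ => Subalgebra.smul_mem _ (mul_mem (pow_mem (Algebra.subset_adjoin (by simp)) n)
      (pow_mem (Algebra.subset_adjoin (by simp)) m)) _
  rw [add_mem_cancel_left ha]
  exact ⟨eq_zero_of_sum_mem_adjoin hrel hLI hv b, by rintro rfl; simp⟩

theorem statement11 (B : Type*) [Ring B] [Algebra (Polynomial ℂ) B]
    (u g : Bˣ) (t : B)
    (hrel : (u : B) * t = (t + algebraMap (Polynomial ℂ) B Polynomial.X) * (u : B))
    (hgt : (g : B) * t = t * (g : B))
    (hgam : (u : B) * (g : B) * ((u⁻¹ : Bˣ) : B) = t * (g : B))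
    (hLI : LinearIndependent (Polynomial ℂ)
      (fun p : ℤ × ℕ => ((u ^ p.1 : Bˣ) : B) * t ^ p.2))
    (n : ℕ) (hn : 0 < n) (a : ℕ →₀ Polynomial ℂ) (b : Fin n → Polynomial ℂ) :
    letI P : B :=
      a.sum (fun m cm => cm • ((((u⁻¹ : Bˣ) : B) * t) ^ n * t ^ m)) +
      ∑ i : Fin n, b i • ((((u⁻¹ : Bˣ) : B) * t) ^ (i : ℕ) *
        ((u ^ ((i : ℕ) - (n : ℤ)) : Bˣ) : B))
    (((g⁻¹ : Bˣ) : B) * P * (g : B) ∈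
        Algebra.adjoin (Polynomial ℂ) ({(u : B), ((u⁻¹ : Bˣ) : B), t} : Set B)) ↔
      b = 0 :=
  statement11_general B u g t hrel hgt hgam hLI n a b
end
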